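/- Let U, V be Hermitian n×n matrices and A an n×n matrix satisfying A*U + UA = V with V positive definite. If U is negative definite, then every eigenvalue of A has negative real part; conversely, if every eigenvalue of A has negative real part and U solves the equation, then U is negative definite. -/

import Mathlib

/-!
Forward direction: if `A v = μ v` with `v ≠ 0`, the Lyapunov equation gives
`⟨V v, v⟩ = 2 Re μ ⟨U v, v⟩`, and the two definiteness assumptions force `Re μ < 0`.

Converse: for `v ≠ 0` the function `q t = ⟨U e^{tA} v, e^{tA} v⟩` has derivative
`⟨V e^{tA} v, e^{tA} v⟩ > 0`, so it is strictly increasing. When the spectrum of `A` lies in the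
open left half-plane, `e^{tA} v → 0` (on a generalized eigenspace `e^{tA} v` is `e^{tμ}` times a
polynomial in `t`), so `q t → 0` and therefore `⟨U v, v⟩ = q 0 < 0`.
-/

open scoped Matrix ComplexOrder Nat
open Filter Topology NormedSpace

-- The ring structure of these instances is only defeq, not syntactically equal, to the default
-- one on matrices; this is why a few rewrites below need `erw` or a closing `rfl`.
attribute [local instance] Matrix.linftyOpNormedRing Matrix.linftyOpNormedAlgebra

theorem tendsto_pow_mul_exp_mul_atTop_nhds_zero (k : ℕ) {c : ℝ} (hc : c < 0) :
    Tendsto (fun t : ℝ => t ^ k * Real.exp (c * t)) atTop (𝓝 0) := by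
  refine (tendsto_rpow_mul_exp_neg_mul_atTop_nhds_zero k (-c) (neg_pos.2 hc)).congr fun t => ?_
  rw [Real.rpow_natCast, neg_neg]

namespace Matrix

variable {ι : Type*} [Fintype ι]

theorem star_mulVec_dotProduct_add_dotProduct_mulVec_mulVec {R : Type*} [CommRing R] [StarRing R]
    (A U : Matrix ι ι R) (v : ι → R) :
    star (A *ᵥ v) ⬝ᵥ U *ᵥ v + star v ⬝ᵥ U *ᵥ (A *ᵥ v) = star v ⬝ᵥ (Aᴴ * U + U * A) *ᵥ v := by
  simp only [star_mulVec, add_mulVec, dotProduct_add, dotProduct_mulVec, vecMul_vecMul]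

theorem star_dotProduct_conjTranspose_mul_mul_mulVec {R : Type*} [CommRing R] [StarRing R]
    (B M : Matrix ι ι R) (v : ι → R) :
    star v ⬝ᵥ (Bᴴ * M * B) *ᵥ v = star (B *ᵥ v) ⬝ᵥ M *ᵥ (B *ᵥ v) := by
  simp only [star_mulVec, dotProduct_mulVec, vecMul_vecMul, Matrix.mul_assoc]

theorem IsHermitian.posDef_iff_re {M : Matrix ι ι ℂ} (hM : M.IsHermitian) :
    M.PosDef ↔ ∀ v ≠ 0, 0 < (star v ⬝ᵥ M *ᵥ v).re := by
  simp only [posDef_iff_dotProduct_mulVec, hM, true_and, Complex.lt_def, Complex.zero_re,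
    Complex.zero_im]
  exact forall₂_congr fun v _ => and_iff_left (hM.im_star_dotProduct_mulVec_self v).symm

theorem re_lt_zero_of_lyapunov {A U V : Matrix ι ι ℂ} (hLyap : Aᴴ * U + U * A = V)
    (hU : (-U).PosDef) (hV : V.PosDef) {μ : ℂ} {v : ι → ℂ} (hv0 : v ≠ 0)
    (hv : A *ᵥ v = μ • v) : μ.re < 0 := by
  have hVv : star v ⬝ᵥ V *ᵥ v = ((2 * μ.re : ℝ) : ℂ) * (star v ⬝ᵥ U *ᵥ v) := by
    rw [← hLyap, ← star_mulVec_dotProduct_add_dotProduct_mulVec_mulVec, hv, mulVec_smul,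
      star_smul, smul_dotProduct, dotProduct_smul, smul_eq_mul, smul_eq_mul, Complex.star_def,
      ← add_mul, add_comm, Complex.add_conj]
  have hpos := hV.isHermitian.posDef_iff_re.1 hV v hv0
  have hneg := hU.isHermitian.posDef_iff_re.1 hU v hv0
  rw [hVv, Complex.re_ofReal_mul] at hpos
  rw [neg_mulVec, dotProduct_neg, Complex.neg_re] at hneg
  nlinarith

noncomputable def reQuadFormCLM (v : ι → ℂ) : Matrix ι ι ℂ →L[ℝ] ℝ :=
  LinearMap.toContinuousLinearMap
    { toFun := fun M => (star v ⬝ᵥ M *ᵥ v).re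
      map_add' := fun M N => by simp [add_mulVec]
      map_smul' := fun r M => by simp [smul_mulVec] }

@[simp]
theorem reQuadFormCLM_apply (v : ι → ℂ) (M : Matrix ι ι ℂ) :
    reQuadFormCLM v M = (star v ⬝ᵥ M *ᵥ v).re :=
  rfl

variable [DecidableEq ι]

theorem exists_mulVec_eq_smul_of_mem_spectrum {K : Type*} [Field K] {A : Matrix ι ι K} {μ : K}
    (hμ : μ ∈ spectrum K A) : ∃ v ≠ 0, A *ᵥ v = μ • v := by
  rw [← spectrum_toLin', ← Module.End.hasEigenvalue_iff_mem_spectrum] at hμ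
  obtain ⟨v, hv⟩ := hμ.exists_hasEigenvector
  exact ⟨v, hv.2, hv.apply_eq_smul⟩

theorem exp_smul_mulVec_eq_sum_of_pow_mulVec_eq_zero (A : Matrix ι ι ℂ) (μ : ℂ) {k : ℕ}
    {v : ι → ℂ} (hv : (A - μ • 1) ^ k *ᵥ v = 0) (t : ℝ) :
    exp (t • A) *ᵥ v = ∑ j ∈ Finset.range k,
      (Complex.exp (t * μ) * ((t ^ j / j ! : ℝ) : ℂ)) • ((A - μ • 1) ^ j *ᵥ v) := by
  set N := A - μ • 1
  have hsplit : exp (t • A) = Complex.exp (t * μ) • exp (t • N) := by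
    have hA : t • A = algebraMap ℂ _ (t * μ) + t • N := by
      rw [Algebra.algebraMap_eq_smul_one, smul_sub, ← smul_assoc, Complex.real_smul]
      abel
    rw [hA, exp_add_of_commute _ _ (Algebra.commute_algebraMap_left _ _)]
    erw [← algebraMap_exp_comm]
    rw [← Algebra.smul_def, Complex.exp_eq_exp_ℂ]
  have hseries : HasSum (fun j => ((j !⁻¹ : ℝ) • (t • N) ^ j) *ᵥ v) (exp (t • N) *ᵥ v) :=
    (exp_series_hasSum_exp' (t • N)).map (mulVec.addMonoidHomLeft v)
      (continuous_id.matrix_mulVec continuous_const)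
  have hfinite : HasSum (fun j => ((j !⁻¹ : ℝ) • (t • N) ^ j) *ᵥ v)
      (∑ j ∈ Finset.range k, ((j !⁻¹ : ℝ) • (t • N) ^ j) *ᵥ v) := by
    refine hasSum_sum_of_ne_finset_zero fun j hj => ?_
    rw [Finset.mem_range, not_lt] at hj
    have hNj : N ^ j *ᵥ v = 0 := by
      rw [← Nat.sub_add_cancel hj, pow_add, ← mulVec_mulVec, hv, mulVec_zero]
    rw [smul_pow, smul_mulVec, smul_mulVec, hNj, smul_zero, smul_zero]
  rw [hsplit, smul_mulVec, hseries.unique hfinite, Finset.smul_sum]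
  refine Finset.sum_congr rfl fun j _ => ?_
  rw [mul_smul, smul_pow, smul_smul, smul_mulVec, Complex.coe_smul, div_eq_inv_mul]

theorem tendsto_exp_smul_mulVec_of_pow_mulVec_eq_zero (A : Matrix ι ι ℂ) {μ : ℂ} (hμ : μ.re < 0)
    {k : ℕ} {v : ι → ℂ} (hv : (A - μ • 1) ^ k *ᵥ v = 0) :
    Tendsto (fun t : ℝ => exp (t • A) *ᵥ v) atTop (𝓝 0) := by
  have hcoeff (j : ℕ) :
      Tendsto (fun t : ℝ => Complex.exp (t * μ) * ((t ^ j / j ! : ℝ) : ℂ)) atTop (𝓝 0) := by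
    rw [tendsto_zero_iff_norm_tendsto_zero]
    refine (zero_div (j ! : ℝ) ▸
      (tendsto_pow_mul_exp_mul_atTop_nhds_zero j hμ).div_const (j ! : ℝ)).congr' ?_
    filter_upwards [eventually_ge_atTop 0] with t ht
    rw [norm_mul, Complex.norm_exp, Complex.norm_real, Real.norm_of_nonneg (by positivity)]
    simp only [Complex.mul_re, Complex.ofReal_re, Complex.ofReal_im, zero_mul, sub_zero]
    rw [mul_comm t]
    ring
  simp_rw [exp_smul_mulVec_eq_sum_of_pow_mulVec_eq_zero A μ hv]
  simpa using tendsto_finsetSum (Finset.range k) fun j _ =>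
    (hcoeff j).smul_const ((A - μ • 1) ^ j *ᵥ v)

theorem tendsto_exp_smul_mulVec_of_forall_re_lt_zero {A : Matrix ι ι ℂ}
    (hA : ∀ μ ∈ spectrum ℂ A, μ.re < 0) (v : ι → ℂ) :
    Tendsto (fun t : ℝ => exp (t • A) *ᵥ v) atTop (𝓝 0) := by
  have hv : v ∈ ⨆ μ, Module.End.maxGenEigenspace A.toLin' μ := by
    simp [Module.End.iSup_maxGenEigenspace_eq_top]
  induction hv using Submodule.iSup_induction' with
  | mem μ w hw =>
    by_cases hw0 : w = 0
    · simp [hw0]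
    obtain ⟨k, hk⟩ := (Module.End.mem_maxGenEigenspace _ _ _).1 hw
    have hμ : μ ∈ spectrum ℂ A := by
      rw [← spectrum_toLin']
      exact (Module.End.HasUnifEigenvalue.lt zero_lt_one
        ((Submodule.ne_bot_iff _).2 ⟨w, hw, hw0⟩)).mem_spectrum
    refine tendsto_exp_smul_mulVec_of_pow_mulVec_eq_zero A (hA μ hμ) (k := k) ?_
    rwa [← toLin'_apply, toLin'_pow, map_sub, map_smul, toLin'_one]
  | zero => simp
  | add w₁ w₂ _ _ h₁ h₂ => simpa [mulVec_add] using h₁.add h₂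

theorem hasDerivAt_conjTranspose_exp_smul_mul_mul_exp_smul (A U : Matrix ι ι ℂ) (t : ℝ) :
    HasDerivAt (fun s : ℝ => (exp (s • A))ᴴ * U * exp (s • A))
      ((exp (t • A))ᴴ * (Aᴴ * U + U * A) * exp (t • A)) t := by
  have hconj (s : ℝ) : (exp (s • A))ᴴ = exp (s • Aᴴ) := by
    rw [← exp_conjTranspose, conjTranspose_smul, star_trivial]
  simp_rw [hconj]
  refine (((hasDerivAt_exp_smul_const Aᴴ t).mul_const U).mul
    (hasDerivAt_exp_smul_const' A t)).congr_deriv ?_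
  simp only [mul_add, add_mul, Matrix.mul_assoc]
  rfl

theorem re_dotProduct_mulVec_lt_zero_of_lyapunov {A U V : Matrix ι ι ℂ}
    (hA : ∀ μ ∈ spectrum ℂ A, μ.re < 0) (hLyap : Aᴴ * U + U * A = V) (hV : V.PosDef)
    {v : ι → ℂ} (hv : v ≠ 0) : (star v ⬝ᵥ U *ᵥ v).re < 0 := by
  set q : ℝ → ℝ := fun t => reQuadFormCLM v ((exp (t • A))ᴴ * U * exp (t • A))
  have hq (t : ℝ) : HasDerivAt q (reQuadFormCLM v ((exp (t • A))ᴴ * V * exp (t • A))) t := by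
    rw [← hLyap]
    exact (reQuadFormCLM v).hasFDerivAt.comp_hasDerivAt t
      (hasDerivAt_conjTranspose_exp_smul_mul_mul_exp_smul A U t)
  have hmono : StrictMono q := by
    refine strictMono_of_deriv_pos fun t => ?_
    have hVt := hV.conjTranspose_mul_mul_same (mulVec_injective_iff_isUnit.2 (isUnit_exp (t • A)))
    rw [(hq t).deriv]
    exact hVt.isHermitian.posDef_iff_re.1 hVt v hv
  have hlim : Tendsto q atTop (𝓝 0) := by
    have hcont : Continuous fun w : ι → ℂ => (star w ⬝ᵥ U *ᵥ w).re := by fun_prop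
    have h := (hcont.tendsto 0).comp (tendsto_exp_smul_mulVec_of_forall_re_lt_zero hA v)
    rw [mulVec_zero, dotProduct_zero, Complex.zero_re] at h
    simpa only [q, reQuadFormCLM_apply, star_dotProduct_conjTranspose_mul_mul_mulVec,
      Function.comp_def] using h
  calc (star v ⬝ᵥ U *ᵥ v).re = q 0 := by simp [q]
    _ < q 1 := hmono zero_lt_one
    _ ≤ 0 := hmono.monotone.ge_of_tendsto hlim 1

end Matrix

theorem lyapunov_stability {n : ℕ} (A U V : Matrix (Fin n) (Fin n) ℂ)
    (hU : U.IsHermitian) (hLyap : Aᴴ * U + U * A = V) (hV : V.PosDef) :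
    (-U).PosDef ↔ ∀ μ ∈ spectrum ℂ A, μ.re < 0 := by
  constructor
  · intro hU_neg μ hμ
    obtain ⟨v, hv0, hv⟩ := Matrix.exists_mulVec_eq_smul_of_mem_spectrum hμ
    exact Matrix.re_lt_zero_of_lyapunov hLyap hU_neg hV hv0 hv
  · intro hA
    refine hU.neg.posDef_iff_re.2 fun v hv => ?_
    rw [Matrix.neg_mulVec, dotProduct_neg, Complex.neg_re, neg_pos]
    exact Matrix.re_dotProduct_mulVec_lt_zero_of_lyapunov hA hLyap hV hv
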